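/- arXiv:2006.04118 — 2 statements merged into one kernel-verified Lean document; each statement's English description precedes it below -/
import Mathlib

section
/- Let R be a ring and M a nonzero R-module of finite length. Suppose the socle of M is simple and isomorphic to a simple module L, the cosocle of M is simple and isomorphic to L, and L occurs with multiplicity exactly 1 among the Jordan–Hölder factors of M. Then M is simple (and hence M ≅ L). -/
open scoped Classical in
/-- Number of Jordan–Hölder factors of a composition series (of submodules of `M`)
isomorphic to the module `L`. -/
noncomputable def jhMult (R : Type*) [Ring R] {M : Type*} [AddCommGroup M] [Module R M]
    (L : Type*) [AddCommGroup L] [Module R L]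
    (s : CompositionSeries (Submodule R M)) : ℕ :=
  (Finset.univ.filter fun i : Fin s.length =>
    Nonempty ((↥(s i.succ) ⧸ ((s i.castSucc).comap (s i.succ).subtype)) ≃ₗ[R] L)).card

/-- `L` occurs as a Jordan–Hölder factor of `M`. -/
def OccursIn (R : Type*) [Ring R] (L : Type*) [AddCommGroup L] [Module R L]
    (M : Type*) [AddCommGroup M] [Module R M] : Prop :=
  ∃ s : CompositionSeries (Submodule R M), s.head = ⊥ ∧ s.last = ⊤ ∧ 1 ≤ jhMult R L s

/-- The Jordan–Hölder multiplicity of `L` in `M` equals `n`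
(for every composition series of `M`). -/
def MultEq (R : Type*) [Ring R] (L : Type*) [AddCommGroup L] [Module R L]
    (M : Type*) [AddCommGroup M] [Module R M] (n : ℕ) : Prop :=
  ∀ s : CompositionSeries (Submodule R M), s.head = ⊥ → s.last = ⊤ → jhMult R L s = n

/-!
Take a composition series `0 = M₀ < M₁ < ⋯ < Mₙ = M`. Its first term `M₁` is a simple submodule;
since the socle is simple, it is the only one, so `M₁` is the socle and the first factor is `≅ L`.
Dually `Mₙ₋₁` is a maximal submodule, hence equals the radical, and the last factor `M ⧸ Mₙ₋₁` is
the cosocle, again `≅ L`. Multiplicity one forces the first and the last factor to coincide, so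
`n = 1` and `M = M₁` is the (simple) socle.
-/

section Lattice

variable {α : Type*} [CompleteLattice α]

theorem IsAtom.eq_sSup_setOf_isAtom {a : α} (ha : IsAtom a) (h : IsAtom (sSup {x : α | IsAtom x})) :
    a = sSup {x : α | IsAtom x} :=
  (h.le_iff_eq ha.1).mp (le_sSup ha)

theorem IsCoatom.eq_sInf_setOf_isCoatom {a : α} (ha : IsCoatom a)
    (h : IsCoatom (sInf {x : α | IsCoatom x})) : a = sInf {x : α | IsCoatom x} :=
  (h.le_iff_eq ha.1).mp (sInf_le ha)

end Lattice

theorem RelSeries.length_pos_of_head_ne_last {α : Type*} {r : SetRel α α} (s : RelSeries r)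
    (h : s.head ≠ s.last) : 0 < s.length :=
  Nat.pos_of_ne_zero <| length_ne_zero_of_nontrivial ⟨s.head, s.head_mem, s.last, s.last_mem, h⟩

namespace CompositionSeries

variable {X : Type*} [Lattice X] [BoundedOrder X] [IsModularLattice X] (s : CompositionSeries X)

theorem isAtom_succ_of_eq_bot {i : Fin s.length} (h : s i.castSucc = ⊥) : IsAtom (s i.succ) :=
  bot_covBy_iff.mp (h ▸ s.step i)

theorem isCoatom_castSucc_of_eq_top {i : Fin s.length} (h : s i.succ = ⊤) :
    IsCoatom (s i.castSucc) :=
  covBy_top_iff.mp (h ▸ s.step i)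

end CompositionSeries

namespace Submodule

variable {R M : Type*} [Ring R] [AddCommGroup M] [Module R M]

noncomputable def quotientComapSubtypeBotEquiv (B : Submodule R M) :
    (B ⧸ (⊥ : Submodule R M).comap B.subtype) ≃ₗ[R] B :=
  quotEquivOfEqBot _ (by simp)

noncomputable def topQuotientComapSubtypeEquiv (A : Submodule R M) :
    ((⊤ : Submodule R M) ⧸ A.comap (⊤ : Submodule R M).subtype) ≃ₗ[R] M ⧸ A :=
  Quotient.equiv _ A topEquiv <| by ext x; simp [mem_comap]

end Submodule

theorem eq_of_jhMult_eq_one {R M L : Type*} [Ring R] [AddCommGroup M] [Module R M]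
    [AddCommGroup L] [Module R L] {s : CompositionSeries (Submodule R M)}
    (h : jhMult R L s = 1) {i j : Fin s.length}
    (hi : Nonempty ((↥(s i.succ) ⧸ ((s i.castSucc).comap (s i.succ).subtype)) ≃ₗ[R] L))
    (hj : Nonempty ((↥(s j.succ) ⧸ ((s j.castSucc).comap (s j.succ).subtype)) ≃ₗ[R] L)) :
    i = j :=
  Finset.card_le_one.mp h.le i (by simpa using hi) j (by simpa using hj)

theorem simple_of_socle_cosocle_multOne_general
    {R M L : Type*} [Ring R] [AddCommGroup M] [Module R M]
    [AddCommGroup L] [Module R L]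
    (hfl : IsFiniteLength R M)
    (hsoc : IsSimpleModule R ↥(sSup {N : Submodule R M | IsAtom N}))
    (hsocL : Nonempty (↥(sSup {N : Submodule R M | IsAtom N}) ≃ₗ[R] L))
    (hcosoc : IsSimpleModule R (M ⧸ sInf {N : Submodule R M | IsCoatom N}))
    (hcosocL : Nonempty ((M ⧸ sInf {N : Submodule R M | IsCoatom N}) ≃ₗ[R] L))
    (hmult : MultEq R L M 1) :
    IsSimpleModule R M ∧ Nonempty (M ≃ₗ[R] L) := by
  set S := sSup {N : Submodule R M | IsAtom N}
  set K := sInf {N : Submodule R M | IsCoatom N}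
  have hS : IsAtom S := isSimpleModule_iff_isAtom.mp hsoc
  have hK : IsCoatom K := isSimpleModule_iff_isCoatom.mp hcosoc
  obtain ⟨s, hhead, hlast⟩ := isFiniteLength_iff_exists_compositionSeries.mp hfl
  have hlen : 0 < s.length :=
    s.length_pos_of_head_ne_last (hhead ▸ hlast ▸ (hS.bot_lt.trans_le le_top).ne)
  let first : Fin s.length := ⟨0, hlen⟩
  let last : Fin s.length := ⟨s.length - 1, by omega⟩
  have hfirst_bot : s first.castSucc = ⊥ := hhead
  have hlast_top : s last.succ = ⊤ := by
    rw [← hlast]; congr; ext; simp [last]; omega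
  have hfirst : s first.succ = S :=
    (s.isAtom_succ_of_eq_bot hfirst_bot).eq_sSup_setOf_isAtom hS
  have hpenult : s last.castSucc = K :=
    (s.isCoatom_castSucc_of_eq_top hlast_top).eq_sInf_setOf_isCoatom hK
  obtain ⟨eS⟩ := hsocL
  obtain ⟨eK⟩ := hcosocL
  have hfirst_last : first = last := eq_of_jhMult_eq_one (hmult s hhead hlast)
    ⟨by rw [hfirst_bot, hfirst]; exact S.quotientComapSubtypeBotEquiv ≪≫ₗ eS⟩
    ⟨by rw [hlast_top, hpenult]; exact K.topQuotientComapSubtypeEquiv ≪≫ₗ eK⟩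
  have hS_top : S = ⊤ := by rw [← hfirst, hfirst_last, hlast_top]
  let e : M ≃ₗ[R] S := Submodule.topEquiv.symm ≪≫ₗ LinearEquiv.ofEq _ _ hS_top.symm
  exact ⟨IsSimpleModule.congr e, ⟨e ≪≫ₗ eS⟩⟩

/-- If a nonzero finite-length module `M` has simple socle isomorphic to `L`, simple
cosocle isomorphic to `L`, and `L` has multiplicity exactly one among the
Jordan–Hölder factors of `M`, then `M` is simple and `M ≅ L`.
(Here the socle is the sum of all simple (= atomic) submodules and the cosocle is the
quotient by the intersection of all maximal proper (= coatomic) submodules.) -/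
theorem simple_of_socle_cosocle_multOne
    {R M L : Type*} [Ring R] [AddCommGroup M] [Module R M] [Nontrivial M]
    [AddCommGroup L] [Module R L] [IsSimpleModule R L]
    (hfl : IsFiniteLength R M)
    (hsoc : IsSimpleModule R ↥(sSup {N : Submodule R M | IsAtom N}))
    (hsocL : Nonempty (↥(sSup {N : Submodule R M | IsAtom N}) ≃ₗ[R] L))
    (hcosoc : IsSimpleModule R (M ⧸ sInf {N : Submodule R M | IsCoatom N}))
    (hcosocL : Nonempty ((M ⧸ sInf {N : Submodule R M | IsCoatom N}) ≃ₗ[R] L))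
    (hmult : MultEq R L M 1) :
    IsSimpleModule R M ∧ Nonempty (M ≃ₗ[R] L) :=
  simple_of_socle_cosocle_multOne_general hfl hsoc hsocL hcosoc hcosocL hmult
end

section
/- Let R be a ring, A and B R-modules of finite length, and L a simple R-module. Suppose A has a unique maximal proper submodule with quotient isomorphic to L, B has simple socle isomorphic to L, and L occurs with multiplicity exactly 1 in B. Then the image of any nonzero R-module homomorphism T : A → B is isomorphic to L. -/
theorem sSup_atoms_le_of_isAtom {α : Type*} [CompleteLattice α] [IsAtomic α]
    (h : IsAtom (sSup {a : α | IsAtom a})) {x : α} (hx : x ≠ ⊥) : sSup {a : α | IsAtom a} ≤ x := by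
  obtain ⟨a, ha, hax⟩ := (eq_bot_or_exists_atom_le x).resolve_left hx
  rwa [← (h.le_iff.mp (le_sSup ha)).resolve_left ha.ne_bot]

theorem le_of_forall_isCoatom_eq {α : Type*} [PartialOrder α] [OrderTop α] [IsCoatomic α]
    {K : α} (hK : ∀ N, IsCoatom N → N = K) {x : α} (hx : x ≠ ⊤) : x ≤ K := by
  obtain ⟨N, hN, hxN⟩ := (eq_top_or_exists_le_coatom x).resolve_left hx
  exact hK N hN ▸ hxN

noncomputable def LinearMap.rangeQuotMapEquivOfKerLE {R A B : Type*} [Ring R] [AddCommGroup A]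
    [Module R A] [AddCommGroup B] [Module R B] (T : A →ₗ[R] B) {K : Submodule R A}
    (h : LinearMap.ker T ≤ K) :
    (↥(LinearMap.range T) ⧸ (K.map T).comap (LinearMap.range T).subtype) ≃ₗ[R] A ⧸ K :=
  let φ := ((K.map T).comap (LinearMap.range T).subtype).mkQ ∘ₗ T.rangeRestrict
  have hφ : LinearMap.ker φ = K := by
    rw [LinearMap.ker_comp, Submodule.ker_mkQ, ← Submodule.comap_comp,
      LinearMap.subtype_comp_codRestrict, Submodule.comap_map_eq, sup_eq_left.mpr h]
  (φ.quotKerEquivOfSurjective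
    ((Submodule.mkQ_surjective _).comp T.surjective_rangeRestrict)).symm.trans
    (Submodule.quotEquivOfEq _ _ hφ)

section JordanHolderMultiplicity

variable {R M L : Type*} [Ring R] [AddCommGroup M] [Module R M] [AddCommGroup L] [Module R L]

variable (L) in
open scoped Classical in
noncomputable def jhFactorIndicator (a b : Submodule R M) : ℕ :=
  if Nonempty ((↥b ⧸ a.comap b.subtype) ≃ₗ[R] L) then 1 else 0

open scoped Classical in
theorem jhMult_eq_sum (s : CompositionSeries (Submodule R M)) :
    jhMult R L s = ∑ i : Fin s.length, jhFactorIndicator L (s i.castSucc) (s i.succ) :=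
  Finset.card_filter _ _

theorem jhMult_smash (p q : CompositionSeries (Submodule R M)) (h : p.last = q.head) :
    jhMult R L (p.smash q h) = jhMult R L p + jhMult R L q := by
  simp only [jhMult_eq_sum]
  refine (Fin.sum_univ_add (fun i : Fin (p.length + q.length) ↦
    jhFactorIndicator L (p.smash q h i.castSucc) (p.smash q h i.succ))).trans ?_
  simp only [RelSeries.smash_castAdd, RelSeries.smash_succ_castAdd, RelSeries.smash_natAdd,
    RelSeries.smash_succ_natAdd]

theorem exists_compositionSeries_jhMult_eq_one {a b : Submodule R M} (h : a ⋖ b)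
    (e : Nonempty ((↥b ⧸ a.comap b.subtype) ≃ₗ[R] L)) :
    ∃ s : CompositionSeries (Submodule R M), s.head = a ∧ s.last = b ∧ jhMult R L s = 1 :=
  ⟨(RelSeries.singleton _ a).snoc b h, RelSeries.head_snoc .., RelSeries.last_snoc .., by
    rw [jhMult_eq_sum]; exact if_pos e⟩

theorem exists_compositionSeries_jhMult_add {a b c : Submodule R M} {m n : ℕ}
    (h₁ : ∃ s : CompositionSeries (Submodule R M), s.head = a ∧ s.last = b ∧ m ≤ jhMult R L s)
    (h₂ : ∃ s : CompositionSeries (Submodule R M), s.head = b ∧ s.last = c ∧ n ≤ jhMult R L s) :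
    ∃ s : CompositionSeries (Submodule R M), s.head = a ∧ s.last = c ∧
      m + n ≤ jhMult R L s := by
  obtain ⟨p, rfl, hp, hpm⟩ := h₁
  obtain ⟨q, rfl, rfl, hqn⟩ := h₂
  exact ⟨p.smash q hp, RelSeries.head_smash hp, RelSeries.last_smash hp,
    (Nat.add_le_add hpm hqn).trans (jhMult_smash p q hp).ge⟩

theorem exists_compositionSeries_of_le [IsNoetherian R M] [IsArtinian R M]
    {x y : Submodule R M} (h : x ≤ y) :
    ∃ s : CompositionSeries (Submodule R M), s.head = x ∧ s.last = y := by
  obtain ⟨f, f0, n, fn, hf⟩ := exists_covBy_seq_of_wellFoundedLT_wellFoundedGT_of_le h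
  exact ⟨⟨n, fun i ↦ f i, fun i ↦ hf i i.2⟩, f0, fn⟩

variable [IsSimpleModule R L]

theorem exists_compositionSeries_two_le_jhMult [IsNoetherian R M] [IsArtinian R M]
    {S K N : Submodule R M} (eS : Nonempty (S ≃ₗ[R] L)) (hSK : S ≤ K) (hKN : K ≤ N)
    (eN : Nonempty ((↥N ⧸ K.comap N.subtype) ≃ₗ[R] L)) :
    ∃ s : CompositionSeries (Submodule R M), s.head = ⊥ ∧ s.last = ⊤ ∧ 2 ≤ jhMult R L s := by
  have eS' : Nonempty ((↥S ⧸ (⊥ : Submodule R M).comap S.subtype) ≃ₗ[R] L) :=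
    eS.map (Submodule.quotEquivOfEqBot _ (by simp)).trans
  have hbotS : ⊥ ⋖ S := (isSimpleModule_iff_isAtom.mp (IsSimpleModule.congr eS.some)).bot_covBy
  have hKN' : K ⋖ N := (covBy_iff_quot_is_simple hKN).mpr (IsSimpleModule.congr eN.some)
  have factor_series {a b : Submodule R M} (h : a ⋖ b)
      (e : Nonempty ((↥b ⧸ a.comap b.subtype) ≃ₗ[R] L)) :
      ∃ s : CompositionSeries (Submodule R M), s.head = a ∧ s.last = b ∧ 1 ≤ jhMult R L s :=
    (exists_compositionSeries_jhMult_eq_one h e).imp fun _ h ↦ ⟨h.1, h.2.1, h.2.2.ge⟩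
  have any_series {a b : Submodule R M} (h : a ≤ b) :
      ∃ s : CompositionSeries (Submodule R M), s.head = a ∧ s.last = b ∧ 0 ≤ jhMult R L s :=
    (exists_compositionSeries_of_le h).imp fun _ h ↦ ⟨h.1, h.2, Nat.zero_le _⟩
  exact exists_compositionSeries_jhMult_add (exists_compositionSeries_jhMult_add
    (exists_compositionSeries_jhMult_add (factor_series hbotS eS') (any_series hSK))
    (factor_series hKN' eN)) (any_series le_top)

end JordanHolderMultiplicity

theorem image_iso_of_unique_top_and_simple_socle_general
    {R A B L : Type*} [Ring R] [AddCommGroup A] [Module R A]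
    [AddCommGroup B] [Module R B] [AddCommGroup L] [Module R L]
    [IsSimpleModule R L]
    (hA : IsFiniteLength R A) (hB : IsFiniteLength R B)
    (K : Submodule R A)
    (hKuniq : ∀ N : Submodule R A, IsCoatom N → N = K)
    (hKL : Nonempty ((A ⧸ K) ≃ₗ[R] L))
    (hsoc : IsSimpleModule R ↥(sSup {N : Submodule R B | IsAtom N}))
    (hsocL : Nonempty (↥(sSup {N : Submodule R B | IsAtom N}) ≃ₗ[R] L))
    (hmultB : MultEq R L B 1)
    (T : A →ₗ[R] B) (hT : T ≠ 0) :
    Nonempty (↥(LinearMap.range T) ≃ₗ[R] L) := by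
  obtain ⟨_, -⟩ := isFiniteLength_iff_isNoetherian_isArtinian.mp hA
  obtain ⟨_, _⟩ := isFiniteLength_iff_isNoetherian_isArtinian.mp hB
  have hker : LinearMap.ker T ≤ K :=
    le_of_forall_isCoatom_eq hKuniq (mt LinearMap.ker_eq_top.mp hT)
  have eQ := hKL.map (T.rangeQuotMapEquivOfKerLE hker).trans
  by_cases hK : K.map T = ⊥
  · exact eQ.map (Submodule.quotEquivOfEqBot _ (by simp [hK])).symm.trans
  · obtain ⟨s, hs_head, hs_last, hs⟩ := exists_compositionSeries_two_le_jhMult hsocL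
      (sSup_atoms_le_of_isAtom (isSimpleModule_iff_isAtom.mp hsoc) hK) T.map_le_range eQ
    have hmult := hmultB s hs_head hs_last
    omega

/-- If `A` has a unique maximal proper submodule with quotient isomorphic to the simple
module `L`, `B` has simple socle isomorphic to `L`, and `L` occurs with multiplicity
exactly one in `B`, then the image of any nonzero homomorphism `T : A → B` is
isomorphic to `L`. -/
theorem image_iso_of_unique_top_and_simple_socle
    {R A B L : Type*} [Ring R] [AddCommGroup A] [Module R A]
    [AddCommGroup B] [Module R B] [AddCommGroup L] [Module R L]
    [IsSimpleModule R L]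
    (hA : IsFiniteLength R A) (hB : IsFiniteLength R B)
    (K : Submodule R A) (hK : IsCoatom K)
    (hKuniq : ∀ N : Submodule R A, IsCoatom N → N = K)
    (hKL : Nonempty ((A ⧸ K) ≃ₗ[R] L))
    (hsoc : IsSimpleModule R ↥(sSup {N : Submodule R B | IsAtom N}))
    (hsocL : Nonempty (↥(sSup {N : Submodule R B | IsAtom N}) ≃ₗ[R] L))
    (hmultB : MultEq R L B 1)
    (T : A →ₗ[R] B) (hT : T ≠ 0) :
    Nonempty (↥(LinearMap.range T) ≃ₗ[R] L) :=
  image_iso_of_unique_top_and_simple_socle_general hA hB K hKuniq hKL hsoc hsocL hmultB T hT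
end
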